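/- Let R_1, …, R_m be globally consistent bags over finite attribute sets X_1, …, X_m, and let W be a minimal witness to their global consistency, i.e., there is no witness U of their global consistency whose support is a proper subset of the support of W. Then |Supp(W)| ≤ Σ_{i=1}^m Σ_{r ∈ Supp(R_i)} log₂(R_i(r) + 1). -/

import Mathlib

variable {A : Type} [DecidableEq A]

/-- The type of `X`-tuples: functions assigning to each attribute `a ∈ X` an element
of its domain `D a`. -/
def Tup (D : A → Type) (X : Finset A) : Type := ∀ a : X, D a.1

/-- Restriction (projection) of an `X`-tuple to `Z ⊆ X`. -/
def Tup.restrict {D : A → Type} {X Z : Finset A} (h : Z ⊆ X) (t : Tup D X) : Tup D Z :=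
  fun a => t ⟨a.1, h a.2⟩

/-- A bag over `X`: a finitely supported function from `X`-tuples to ℕ. -/
abbrev Bag (D : A → Type) (X : Finset A) : Type := Tup D X →₀ ℕ

/-- The marginal of a bag on `Z ⊆ X`. -/
noncomputable def Bag.marginal {D : A → Type} {X Z : Finset A} (h : Z ⊆ X) (R : Bag D X) :
    Bag D Z := Finsupp.mapDomain (Tup.restrict h) R

/-- Two bags are consistent if a common bag over the union of schemas has them as marginals. -/
def Consistent {D : A → Type} {X Y : Finset A} (R : Bag D X) (S : Bag D Y) : Prop :=
  ∃ T : Bag D (X ∪ Y),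
    Bag.marginal Finset.subset_union_left T = R ∧
    Bag.marginal Finset.subset_union_right T = S

/-- `W` witnesses the global consistency of the family `R`. -/
def IsWitness {D : A → Type} {m : ℕ} (X : Fin m → Finset A) (R : ∀ i, Bag D (X i))
    (W : Bag D (Finset.univ.sup X)) : Prop :=
  ∀ i, Bag.marginal (Finset.le_sup (Finset.mem_univ i)) W = R i

/-!
Restricting a minimal witness `W` to a subset `T` of its support gives a bag whose marginals are
sub-bags of the `R i`. Two different subsets cannot produce the same tuple of marginals: if
`T ⊄ T'`, replacing the part of `W` on `T` by its part on `T'` would give a witness with strictly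
smaller support. Hence `2 ^ |Supp W|` is at most the number of tuples of sub-bags,
`∏ᵢ ∏_{r ∈ Supp Rᵢ} (Rᵢ(r) + 1)`, and taking `log₂` gives the bound.
-/

open Finset

lemma Finsupp.mapDomain_filter_le {α β M : Type*} [AddCommMonoid M] [PartialOrder M]
    [IsOrderedAddMonoid M] [CanonicallyOrderedAdd M] (f : α → β) (g : α →₀ M) (p : α → Prop)
    [DecidablePred p] :
    (g.filter p).mapDomain f ≤ g.mapDomain f := by
  refine Finsupp.mapDomain_mono fun a => ?_
  rw [Finsupp.filter_apply]
  split_ifs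
  exacts [le_rfl, zero_le]

namespace IsWitness

variable {D : A → Type} {m : ℕ} {X : Fin m → Finset A} {R : ∀ i, Bag D (X i)}
  {W : Bag D (univ.sup X)} [DecidableEq (Tup D (univ.sup X))]

lemma filter_notMem_add_filter_mem (hW : IsWitness X R W) {T T' : Finset (Tup D (univ.sup X))}
    (hTT' : ∀ i, Bag.marginal (le_sup (mem_univ i)) (W.filter (· ∈ T)) =
      Bag.marginal (le_sup (mem_univ i)) (W.filter (· ∈ T'))) :
    IsWitness X R (W.filter (· ∉ T) + W.filter (· ∈ T')) := by
  intro i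
  have h := hTT' i
  unfold Bag.marginal at h ⊢
  rw [← hW i, Bag.marginal, Finsupp.mapDomain_add, ← h, ← Finsupp.mapDomain_add, add_comm,
    Finsupp.filter_add_filter_not]

lemma subset_of_marginal_filter_eq (hW : IsWitness X R W)
    (hmin : ∀ U, IsWitness X R U → ¬ U.support ⊂ W.support)
    {T T' : Finset (Tup D (univ.sup X))} (hT : T ⊆ W.support)
    (hTT' : ∀ i, Bag.marginal (le_sup (mem_univ i)) (W.filter (· ∈ T)) =
      Bag.marginal (le_sup (mem_univ i)) (W.filter (· ∈ T'))) :
    T ⊆ T' := by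
  intro x hxT
  by_contra hxT'
  set U := W.filter (· ∉ T) + W.filter (· ∈ T')
  have hUW : U.support ⊆ W.support := by
    refine Finsupp.support_add.trans (union_subset ?_ ?_) <;> exact filter_subset _ _
  have hxU : x ∉ U.support := by
    simp [U, hxT, hxT']
  exact hmin U (hW.filter_notMem_add_filter_mem hTT')
    ((ssubset_iff_of_subset hUW).2 ⟨x, hT hxT, hxU⟩)

lemma two_pow_card_support_le [∀ i, DecidableEq (Tup D (X i))] (hW : IsWitness X R W)
    (hmin : ∀ U, IsWitness X R U → ¬ U.support ⊂ W.support) :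
    2 ^ #W.support ≤ ∏ i, #(Iic (R i)) := by
  let F : Finset (Tup D (univ.sup X)) → ∀ i, Bag D (X i) :=
    fun T i => Bag.marginal (le_sup (mem_univ i)) (W.filter (· ∈ T))
  have hmaps : Set.MapsTo F W.support.powerset (Fintype.piFinset fun i => Iic (R i)) := by
    intro T _
    rw [mem_coe, Fintype.mem_piFinset]
    intro i
    rw [mem_Iic, ← hW i]
    exact Finsupp.mapDomain_filter_le _ W (· ∈ T)
  have hinj : Set.InjOn F W.support.powerset := by
    intro T hT T' hT' hF
    simp only [coe_powerset, Set.mem_preimage, Set.mem_powerset_iff, coe_subset] at hT hT'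
    exact (hW.subset_of_marginal_filter_eq hmin hT (congrFun hF)).antisymm
      (hW.subset_of_marginal_filter_eq hmin hT' fun i => (congrFun hF i).symm)
  calc 2 ^ #W.support = #W.support.powerset := (card_powerset _).symm
    _ ≤ #(Fintype.piFinset fun i => Iic (R i)) := card_le_card_of_injOn F hmaps hinj
    _ = ∏ i, #(Iic (R i)) := Fintype.card_piFinset _

end IsWitness

lemma Finsupp.logb_card_Iic {α : Type*} [DecidableEq α] (f : α →₀ ℕ) (b : ℝ) :
    Real.logb b #(Iic f) = ∑ r ∈ f.support, Real.logb b ((f r : ℝ) + 1) := by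
  rw [Finsupp.card_Iic, Nat.cast_prod, Real.logb_prod _ _ fun r _ => by positivity]
  simp

/-- if `W` is a *minimal* witness to the global consistency of the bags
`R 0, …, R m` (no witness has support properly contained in that of `W`), then the support
size of `W` is at most the sum of the binary sizes `Σ_r log₂(R i r + 1)` of the `R i`. -/
theorem stmt15 {D : A → Type} {m : ℕ} (X : Fin (m + 1) → Finset A)
    (R : ∀ i, Bag D (X i))
    (W : Bag D (Finset.univ.sup X)) (hW : IsWitness X R W)
    (hmin : ∀ U : Bag D (Finset.univ.sup X), IsWitness X R U → ¬ U.support ⊂ W.support) :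
    (W.support.card : ℝ) ≤
      ∑ i, ∑ r ∈ (R i).support, Real.logb 2 ((R i r : ℝ) + 1) := by
  classical
  have hpos : (0 : ℝ) < (∏ i, #(Iic (R i)) : ℕ) := by
    exact_mod_cast prod_pos fun i _ => card_pos.2 nonempty_Iic
  calc (#W.support : ℝ) ≤ Real.logb 2 (∏ i, #(Iic (R i)) : ℕ) := by
        rw [Real.le_logb_iff_rpow_le one_lt_two hpos, Real.rpow_natCast]
        exact_mod_cast hW.two_pow_card_support_le hmin
    _ = ∑ i, Real.logb 2 #(Iic (R i)) := by
        rw [Nat.cast_prod, Real.logb_prod _ _ fun i _ => by positivity]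
    _ = _ := by simp_rw [Finsupp.logb_card_Iic]
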